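/- Let D ⊆ Nodes be a set of failed nodes, and suppose the set of zones z in which D contains at least f+1 nodes (i.e., |D_z| ≥ f+1, where D_z = {x ∈ D : x.1 = z}) has cardinality at most F. If moreover Z ≥ 2F + 1, then there exists a phase-2 quorum q2 ∈ Q2 with q2 ∩ D = ∅; that is, WPaxos can form a valid phase-2 quorum despite up to F failed zones and up to f crashed nodes in every other zone. -/

import Mathlib

/-!
Call a zone good if it holds at most `f` failed nodes. At most `F` zones are bad, so at least
`Z - F ≥ F + 1` are good, and a good zone still has `2f + 1 - f = f + 1` live nodes. Taking
`f + 1` live nodes in each of `F + 1` good zones gives a phase-2 quorum that avoids `D`.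
-/

/-- A node lives in one of `Z` zones, each zone having `2f+1` nodes. -/
abbrev Node (f Z : ℕ) := Fin Z × Fin (2 * f + 1)

/-- The part of a set of nodes `q` lying in zone `z`. -/
def zpart (f Z : ℕ) (q : Finset (Node f Z)) (z : Fin Z) : Finset (Node f Z) :=
  q.filter (fun x => x.1 = z)

/-- WPaxos phase-1 quorums: `Z - F` zones, `f+1` nodes in each touched zone. -/
def Q1 (f F Z : ℕ) : Set (Finset (Node f Z)) :=
  {q | (q.image Prod.fst).card = Z - F ∧
       ∀ z : Fin Z, (zpart f Z q z).Nonempty → (zpart f Z q z).card = f + 1}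

/-- WPaxos phase-2 quorums: `F + 1` zones, `f+1` nodes in each touched zone. -/
def Q2 (f F Z : ℕ) : Set (Finset (Node f Z)) :=
  {q | (q.image Prod.fst).card = F + 1 ∧
       ∀ z : Fin Z, (zpart f Z q z).Nonempty → (zpart f Z q z).card = f + 1}

open Finset

variable {f F Z : ℕ}

theorem mem_zpart {q : Finset (Node f Z)} {z : Fin Z} {x : Node f Z} :
    x ∈ zpart f Z q z ↔ x ∈ q ∧ x.1 = z :=
  mem_filter

theorem card_zpart_univ (z : Fin Z) : (zpart f Z univ z).card = 2 * f + 1 := by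
  have : zpart f Z univ z = {z} ×ˢ univ := by
    ext ⟨w, i⟩
    simp [mem_zpart, eq_comm]
  simp [this]

theorem card_zpart_compl (D : Finset (Node f Z)) (z : Fin Z) :
    (zpart f Z Dᶜ z).card = 2 * f + 1 - (zpart f Z D z).card := by
  have : zpart f Z Dᶜ z = zpart f Z univ z \ zpart f Z D z := by
    ext x
    simp only [mem_zpart, mem_compl, mem_sdiff, mem_univ, true_and]
    tauto
  have hsub : zpart f Z D z ⊆ zpart f Z univ z := filter_subset_filter _ (subset_univ D)
  rw [this, card_sdiff_of_subset hsub, card_zpart_univ]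

section biUnion

variable {S : Finset (Fin Z)} {T : Fin Z → Finset (Node f Z)}

theorem zpart_biUnion (hT : ∀ z, ∀ x ∈ T z, x.1 = z) (z : Fin Z) :
    zpart f Z (S.biUnion T) z = if z ∈ S then T z else ∅ := by
  ext x
  simp only [mem_zpart, mem_biUnion]
  constructor
  · rintro ⟨⟨w, hw, hx⟩, rfl⟩
    obtain rfl := hT w x hx
    simpa [hw]
  · intro hx
    split_ifs at hx with hz
    · exact ⟨⟨z, hz, hx⟩, hT z x hx⟩
    · simp at hx

theorem image_fst_biUnion (hT : ∀ z, ∀ x ∈ T z, x.1 = z) (hne : ∀ z ∈ S, (T z).Nonempty) :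
    (S.biUnion T).image Prod.fst = S := by
  ext z
  simp only [mem_image, mem_biUnion]
  constructor
  · rintro ⟨x, ⟨w, hw, hx⟩, rfl⟩
    rwa [hT w x hx]
  · intro hz
    obtain ⟨x, hx⟩ := hne z hz
    exact ⟨x, ⟨z, hz, hx⟩, hT z x hx⟩

theorem biUnion_mem_Q2 (hS : S.card = F + 1) (hT : ∀ z, ∀ x ∈ T z, x.1 = z)
    (hcard : ∀ z ∈ S, (T z).card = f + 1) : S.biUnion T ∈ Q2 f F Z := by
  refine ⟨?_, fun z hz => ?_⟩
  · rw [image_fst_biUnion hT fun z hz => card_pos.1 (by simp [hcard z hz]), hS]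
  · rw [zpart_biUnion hT] at hz ⊢
    split_ifs at hz ⊢ with hzS
    · exact hcard z hzS
    · simp at hz

end biUnion

theorem wpaxos_q2_fault_tolerance_general (f F Z : ℕ)
    (hZ : 2 * F + 1 ≤ Z)
    (D : Finset (Node f Z))
    (hD : (Finset.univ.filter
        (fun z : Fin Z => f + 1 ≤ (zpart f Z D z).card)).card ≤ F) :
    ∃ q2 ∈ Q2 f F Z, q2 ∩ D = ∅ := by
  have hgood : F + 1 ≤ (univ.filter fun z : Fin Z => (zpart f Z D z).card ≤ f).card := by
    have := card_filter_add_card_filter_not (s := univ)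
      fun z : Fin Z => f + 1 ≤ (zpart f Z D z).card
    simp only [not_le, Nat.lt_succ_iff, card_univ, Fintype.card_fin] at this
    omega
  obtain ⟨S, hSgood, hScard⟩ := exists_subset_card_eq hgood
  -- The `min` makes the choice possible in every zone; in a good zone it is `f + 1`.
  choose T hTlive hTcard using fun z : Fin Z =>
    exists_subset_card_eq (min_le_right (f + 1) (zpart f Z Dᶜ z).card)
  refine ⟨S.biUnion T, biUnion_mem_Q2 hScard (fun z x hx => (mem_zpart.1 (hTlive z hx)).2)
    fun z hz => ?_, ?_⟩
  · have hzgood := (mem_filter.1 (hSgood hz)).2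
    rw [hTcard, card_zpart_compl]
    omega
  · rw [← disjoint_iff_inter_eq_empty, disjoint_biUnion_left]
    exact fun z _ => (disjoint_compl_left.mono_left (filter_subset _ _)).mono_left (hTlive z)

/-- If at most `F` zones contain `f+1` or more failed nodes and
`Z ≥ 2F + 1`, then some phase-2 quorum avoids all failed nodes. -/
theorem wpaxos_q2_fault_tolerance (f F Z : ℕ) (hFZ : F < Z)
    (hZ : 2 * F + 1 ≤ Z)
    (D : Finset (Node f Z))
    (hD : (Finset.univ.filter
        (fun z : Fin Z => f + 1 ≤ (zpart f Z D z).card)).card ≤ F) :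
    ∃ q2 ∈ Q2 f F Z, q2 ∩ D = ∅ :=
  wpaxos_q2_fault_tolerance_general f F Z hZ D hD
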